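/- (Dual step bounded by primal steps.) Let w > 0, μ > 0, γ > 0, B ≥ 0, F ≥ 0. Let f be a real-valued function differentiable on symmetric positive definite d×d matrices, let U, U' ∈ SO(d), let P, P' be symmetric positive definite, and let Λ, Λ' ∈ ℝ^{d×d}. Assume: (i) ‖∇f(P)‖ ≤ B and ‖∇f(P')‖ ≤ B; (ii) ‖∇f(P') − ∇f(P)‖ ≤ F‖P' − P‖; (iii) the optimality relations (w/μ) U ∇f(P) = (1/2)(Λ + U Λᵀ U) and (w/μ) U' ∇f(P') = (1/2)(Λ' + U' (Λ')ᵀ U') hold; and (iv) ‖Λ' − Λ‖² ≤ (γ/4) ‖Λ' + U'(Λ')ᵀU' − Λ − UΛᵀU‖². Then ‖Λ' − Λ‖² ≤ (2γw²B²/μ²)‖U' − U‖² + (2γw²F²/μ²)‖P' − P‖², where all norms are Frobenius norms. -/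
import Mathlib


open Matrix

attribute [local instance] Matrix.frobeniusNormedAddCommGroup Matrix.frobeniusNormedSpace

/-- Squared Frobenius norm `‖X‖² = trace(Xᵀ X)`. -/
noncomputable def frobSq {d : ℕ} (X : Matrix (Fin d) (Fin d) ℝ) : ℝ :=
  Matrix.trace (Xᵀ * X)

/-- Frobenius norm `‖X‖ = (trace(Xᵀ X))^{1/2}`. -/
noncomputable def frobNorm {d : ℕ} (X : Matrix (Fin d) (Fin d) ℝ) : ℝ :=
  Real.sqrt (frobSq X)

lemma frobSq_eq_sq_norm {d : ℕ} (X : Matrix (Fin d) (Fin d) ℝ) : frobSq X = ‖X‖ ^ 2 := by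
  have hnn : (0 : ℝ) ≤ ∑ i, ∑ j, ‖X i j‖ ^ (2 : ℝ) := by
    refine Finset.sum_nonneg fun i _ => Finset.sum_nonneg fun j _ => ?_
    positivity
  have hnorm : ‖X‖ = Real.sqrt (∑ i, ∑ j, ‖X i j‖ ^ (2 : ℝ)) := by
    rw [Matrix.frobenius_norm_def, Real.sqrt_eq_rpow]
  have h2 : ‖X‖ ^ 2 = ∑ i, ∑ j, ‖X i j‖ ^ (2 : ℝ) := by
    rw [hnorm, Real.sq_sqrt hnn]
  rw [h2, frobSq, Matrix.trace]
  rw [Finset.sum_comm]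
  congr 1
  ext i
  simp only [Matrix.diag_apply, Matrix.mul_apply, Matrix.transpose_apply]
  congr 1
  ext j
  rw [Real.rpow_two, Real.norm_eq_abs, sq_abs, sq]

lemma frobNorm_eq_norm {d : ℕ} (X : Matrix (Fin d) (Fin d) ℝ) : frobNorm X = ‖X‖ := by
  rw [frobNorm, frobSq_eq_sq_norm, Real.sqrt_sq (norm_nonneg _)]

lemma norm_rot_mul {d : ℕ} (U X : Matrix (Fin d) (Fin d) ℝ) (hU : Uᵀ * U = 1) :
    ‖U * X‖ = ‖X‖ := by
  have h : frobSq (U * X) = frobSq X := by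
    rw [frobSq, frobSq, Matrix.transpose_mul]
    rw [show Xᵀ * Uᵀ * (U * X) = Xᵀ * (Uᵀ * U) * X by noncomm_ring, hU, Matrix.mul_one]
  have h1 := frobSq_eq_sq_norm (U * X)
  have h2 := frobSq_eq_sq_norm X
  rw [h1, h2] at h
  rw [← Real.sqrt_sq (norm_nonneg (U * X)), ← Real.sqrt_sq (norm_nonneg X), h]

/-- dual step bounded by primal steps: under the gradient bounds (i),
the Lipschitz bound (ii), the P-update optimality relations (iii), and Condition B (iv),
the dual update satisfies
`‖Λ' − Λ‖² ≤ (2γw²B²/μ²)‖U' − U‖² + (2γw²F²/μ²)‖P' − P‖²`. -/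
theorem dual_bounded_by_primal (d : ℕ) (w μ γ B F : ℝ)
    (hw : 0 < w) (hμ : 0 < μ) (hγ : 0 < γ) (hB : 0 ≤ B) (hF : 0 ≤ F)
    (f : Matrix (Fin d) (Fin d) ℝ → ℝ) (gradf : Matrix (Fin d) (Fin d) ℝ → Matrix (Fin d) (Fin d) ℝ)
    -- `gradf` is the gradient of `f` (w.r.t. the Frobenius inner product), and `f` is
    -- differentiable, on symmetric positive definite matrices:
    (hgrad : ∀ X : Matrix (Fin d) (Fin d) ℝ, X.PosDef →
      ∃ L : Matrix (Fin d) (Fin d) ℝ →L[ℝ] ℝ, HasFDerivAt f L X ∧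
        ∀ H : Matrix (Fin d) (Fin d) ℝ, L H = Matrix.trace ((gradf X)ᵀ * H))
    (U U' : Matrix (Fin d) (Fin d) ℝ)
    (hU : Uᵀ * U = 1) (hdetU : U.det = 1) (hU' : U'ᵀ * U' = 1) (hdetU' : U'.det = 1)
    (P P' : Matrix (Fin d) (Fin d) ℝ) (hP : P.PosDef) (hP' : P'.PosDef)
    (Λ Λ' : Matrix (Fin d) (Fin d) ℝ)
    -- (i) gradient bounds:
    (hB1 : frobNorm (gradf P) ≤ B) (hB2 : frobNorm (gradf P') ≤ B)
    -- (ii) Lipschitz bound: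
    (hLip : frobNorm (gradf P' - gradf P) ≤ F * frobNorm (P' - P))
    -- (iii) optimality relations:
    (hopt : (w / μ) • (U * gradf P) = (1 / 2 : ℝ) • (Λ + U * Λᵀ * U))
    (hopt' : (w / μ) • (U' * gradf P') = (1 / 2 : ℝ) • (Λ' + U' * Λ'ᵀ * U'))
    -- (iv) Condition B:
    (hcondB : frobSq (Λ' - Λ) ≤
      γ / 4 * frobSq (Λ' + U' * Λ'ᵀ * U' - Λ - U * Λᵀ * U)) :
    frobSq (Λ' - Λ) ≤
      2 * γ * w ^ 2 * B ^ 2 / μ ^ 2 * frobSq (U' - U) +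
      2 * γ * w ^ 2 * F ^ 2 / μ ^ 2 * frobSq (P' - P) := by
  set g := gradf P
  set g' := gradf P'
  -- Express the symmetrized dual difference via the optimality relations
  have h1 : Λ + U * Λᵀ * U = (2 * (w / μ)) • (U * g) := by
    have := congrArg (fun X => (2 : ℝ) • X) hopt
    simp only [smul_smul] at this
    norm_num at this
    exact this.symm
  have h1' : Λ' + U' * Λ'ᵀ * U' = (2 * (w / μ)) • (U' * g') := by
    have := congrArg (fun X => (2 : ℝ) • X) hopt'
    simp only [smul_smul] at this
    norm_num at this
    exact this.symm
  have hD : Λ' + U' * Λ'ᵀ * U' - Λ - U * Λᵀ * U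
      = (2 * (w / μ)) • (U' * g' - U * g) := by
    rw [smul_sub, ← h1, ← h1']
    abel
  -- Bound the norm of the gradient-difference term
  have hBg' : ‖g'‖ ≤ B := by rwa [frobNorm_eq_norm] at hB2
  have hLip' : ‖g' - g‖ ≤ F * ‖P' - P‖ := by
    rwa [frobNorm_eq_norm, frobNorm_eq_norm] at hLip
  have hsplit : U' * g' - U * g = (U' - U) * g' + U * (g' - g) := by
    rw [Matrix.sub_mul, Matrix.mul_sub]; abel
  have hnorm1 : ‖(U' - U) * g'‖ ≤ ‖U' - U‖ * B := by
    calc ‖(U' - U) * g'‖ ≤ ‖U' - U‖ * ‖g'‖ := Matrix.frobenius_norm_mul _ _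
    _ ≤ ‖U' - U‖ * B := by
        exact mul_le_mul_of_nonneg_left hBg' (norm_nonneg _)
  have hnorm2 : ‖U * (g' - g)‖ ≤ F * ‖P' - P‖ := by
    rw [norm_rot_mul U _ hU]; exact hLip'
  have hkey : ‖U' * g' - U * g‖ ≤ ‖U' - U‖ * B + F * ‖P' - P‖ := by
    rw [hsplit]
    exact le_trans (norm_add_le _ _) (add_le_add hnorm1 hnorm2)
  -- Square the bound
  have hkeysq : ‖U' * g' - U * g‖ ^ 2
      ≤ 2 * B ^ 2 * ‖U' - U‖ ^ 2 + 2 * F ^ 2 * ‖P' - P‖ ^ 2 := by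
    nlinarith [norm_nonneg (U' * g' - U * g), norm_nonneg (U' - U), norm_nonneg (P' - P),
      mul_nonneg (norm_nonneg (U' - U)) hB, mul_nonneg hF (norm_nonneg (P' - P)),
      sq_nonneg (‖U' - U‖ * B - F * ‖P' - P‖)]
  -- Compute frobSq of the symmetrized dual difference
  have hDsq : frobSq (Λ' + U' * Λ'ᵀ * U' - Λ - U * Λᵀ * U)
      = (2 * (w / μ)) ^ 2 * ‖U' * g' - U * g‖ ^ 2 := by
    rw [hD, frobSq_eq_sq_norm, norm_smul, mul_pow]
    congr 1
    rw [Real.norm_eq_abs, sq_abs]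
  calc frobSq (Λ' - Λ) ≤ γ / 4 * frobSq (Λ' + U' * Λ'ᵀ * U' - Λ - U * Λᵀ * U) := hcondB
    _ = γ / 4 * ((2 * (w / μ)) ^ 2 * ‖U' * g' - U * g‖ ^ 2) := by rw [hDsq]
    _ ≤ γ / 4 * ((2 * (w / μ)) ^ 2 *
        (2 * B ^ 2 * ‖U' - U‖ ^ 2 + 2 * F ^ 2 * ‖P' - P‖ ^ 2)) := by
        apply mul_le_mul_of_nonneg_left _ (by positivity)
        exact mul_le_mul_of_nonneg_left hkeysq (by positivity)
    _ = 2 * γ * w ^ 2 * B ^ 2 / μ ^ 2 * frobSq (U' - U) +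
        2 * γ * w ^ 2 * F ^ 2 / μ ^ 2 * frobSq (P' - P) := by
        rw [frobSq_eq_sq_norm, frobSq_eq_sq_norm]
        field_simp
        ring
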